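/- arXiv:1907.02415 — 8 statements merged into one kernel-verified Lean document; each statement's English description precedes it below -/
import Mathlib

section
/- The linear map D on gl_2(ℂ) sending e1 ↦ a·e1 + (a-1)·e4, e2 ↦ e2, e3 ↦ e3, e4 ↦ (a-1)·e1 + a·e4 (where e1=E11, e2=E12, e3=E21, e4=E22 and a ∈ ℂ is arbitrary) is a multiplicative Hom-Lie algebra structure on gl_2(ℂ). -/
/-!
Writing `I` for the identity matrix, the map is `D x = x + (a - 1) · tr(x) · I`. It differs from the
identity by a map into the centre that kills commutators (brackets have trace zero). Hence
`D ⁅x, y⁆ = ⁅x, y⁆ = ⁅D x, D y⁆`, and `⁅D x, ⁅y, z⁆⁆ = ⁅x, ⁅y, z⁆⁆`, so the Hom-Jacobi identity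
is the Jacobi identity.
-/

open Matrix

section CentralPerturbation

variable {L : Type*} [LieRing L] {D : L → L}

theorem lie_apply_left_of_sub_central (hD : ∀ x y : L, ⁅D x - x, y⁆ = 0) (x y : L) :
    ⁅D x, y⁆ = ⁅x, y⁆ := by
  rw [← sub_eq_zero, ← sub_lie, hD]

theorem lie_apply_apply_of_sub_central (hD : ∀ x y : L, ⁅D x - x, y⁆ = 0) (x y : L) :
    ⁅D x, D y⁆ = ⁅x, y⁆ := by
  rw [lie_apply_left_of_sub_central hD, ← lie_skew, lie_apply_left_of_sub_central hD, lie_skew]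

theorem homJacobi_of_sub_central (hD : ∀ x y : L, ⁅D x - x, y⁆ = 0) (x y z : L) :
    ⁅D x, ⁅y, z⁆⁆ + ⁅D y, ⁅z, x⁆⁆ + ⁅D z, ⁅x, y⁆⁆ = 0 := by
  simp only [lie_apply_left_of_sub_central hD, lie_jacobi]

end CentralPerturbation

namespace Matrix

attribute [local instance] LieRing.ofAssociativeRing

variable {n R : Type*} [Fintype n] [CommRing R]

theorem algebraMap_lie [DecidableEq n] (r : R) (y : Matrix n n R) :
    ⁅algebraMap R (Matrix n n R) r, y⁆ = 0 := by
  rw [Ring.lie_def, Algebra.commutes, sub_self]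

theorem trace_lie (x y : Matrix n n R) : trace ⁅x, y⁆ = 0 := by
  rw [Ring.lie_def, trace_sub, trace_mul_comm, sub_self]

variable [DecidableEq n]

def addTraceSMulOne (c : R) : Matrix n n R →ₗ[R] Matrix n n R :=
  LinearMap.id + c • (Algebra.linearMap R (Matrix n n R) ∘ₗ traceLinearMap n R R)

theorem addTraceSMulOne_apply (c : R) (x : Matrix n n R) :
    addTraceSMulOne c x = x + algebraMap R (Matrix n n R) (c * trace x) := by
  simp [addTraceSMulOne, Algebra.smul_def]

theorem addTraceSMulOne_sub_lie (c : R) (x y : Matrix n n R) :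
    ⁅addTraceSMulOne c x - x, y⁆ = 0 := by
  rw [addTraceSMulOne_apply, add_sub_cancel_left, algebraMap_lie]

theorem addTraceSMulOne_lie (c : R) (x y : Matrix n n R) :
    addTraceSMulOne c ⁅x, y⁆ = ⁅addTraceSMulOne c x, addTraceSMulOne c y⁆ := by
  rw [lie_apply_apply_of_sub_central (addTraceSMulOne_sub_lie c) x y, addTraceSMulOne_apply,
    trace_lie, mul_zero, map_zero, add_zero]

theorem addTraceSMulOne_homJacobi (c : R) (x y z : Matrix n n R) :
    ⁅addTraceSMulOne c x, ⁅y, z⁆⁆ + ⁅addTraceSMulOne c y, ⁅z, x⁆⁆ +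
      ⁅addTraceSMulOne c z, ⁅x, y⁆⁆ = 0 :=
  homJacobi_of_sub_central (addTraceSMulOne_sub_lie c) x y z

end Matrix

theorem eq_addTraceSMulOne_of_single (a : ℂ)
    (D : Matrix (Fin 2) (Fin 2) ℂ →ₗ[ℂ] Matrix (Fin 2) (Fin 2) ℂ)
    (h1 : D (single 0 0 1) = a • single 0 0 1 + (a - 1) • single 1 1 1)
    (h2 : D (single 0 1 1) = single 0 1 1)
    (h3 : D (single 1 0 1) = single 1 0 1)
    (h4 : D (single 1 1 1) = (a - 1) • single 0 0 1 + a • single 1 1 1) :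
    D = addTraceSMulOne (a - 1) := by
  refine Matrix.ext_linearMap ℂ <| Fin.forall_fin_two.2
    ⟨Fin.forall_fin_two.2 ⟨?_, ?_⟩, Fin.forall_fin_two.2 ⟨?_, ?_⟩⟩
  all_goals
    refine LinearMap.ext_ring ?_
    simp only [LinearMap.comp_apply, singleLinearMap_apply, addTraceSMulOne_apply,
      h1, h2, h3, h4]
    ext k l
    fin_cases k <;> fin_cases l <;> simp [single, algebraMap_eq_diagonal, trace_fin_two]

/-- the map `e1 ↦ a·e1+(a-1)·e4, e2 ↦ e2, e3 ↦ e3,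
e4 ↦ (a-1)·e1+a·e4` on `gl₂(ℂ)` is a multiplicative Hom-Lie algebra structure. -/
theorem stmt1 (a : ℂ)
    (D : Matrix (Fin 2) (Fin 2) ℂ →ₗ[ℂ] Matrix (Fin 2) (Fin 2) ℂ)
    (h1 : D (Matrix.single 0 0 1) =
      a • Matrix.single 0 0 1 + (a - 1) • Matrix.single 1 1 1)
    (h2 : D (Matrix.single 0 1 1) = Matrix.single 0 1 1)
    (h3 : D (Matrix.single 1 0 1) = Matrix.single 1 0 1)
    (h4 : D (Matrix.single 1 1 1) =
      (a - 1) • Matrix.single 0 0 1 + a • Matrix.single 1 1 1) :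
    (∀ x y, D ⁅x, y⁆ = ⁅D x, D y⁆) ∧
      (∀ x y z, ⁅D x, ⁅y, z⁆⁆ + ⁅D y, ⁅z, x⁆⁆ + ⁅D z, ⁅x, y⁆⁆ = 0) := by
  obtain rfl := eq_addTraceSMulOne_of_single a D h1 h2 h3 h4
  exact ⟨addTraceSMulOne_lie (a - 1), addTraceSMulOne_homJacobi (a - 1)⟩
end

section
/- Let n ≥ 3 and let D be a multiplicative Hom-Lie algebra structure on gl_n(ℂ) whose restriction to sl_n(ℂ) is the identity. Then D(z) = a·z for some a ∈ ℂ, where z is the identity matrix (a generator of the center); consequently D = diag{1,...,1,a} with respect to a basis of gl_n(ℂ) consisting of a basis of sl_n(ℂ) together with z. -/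
/-!
Put `z = 1` into the Hom-Jacobi identity: since `z` is central, the first two terms vanish and
`D z` commutes with every commutator. Each off-diagonal matrix unit is a commutator,
`E i j = ⁅E i i, E i j⁆`, and a matrix commuting with all off-diagonal matrix units is scalar.
-/

open Matrix

theorem lie_apply_lie_eq_zero_of_forall_lie_eq_zero {L : Type*} [LieRing L] (D : L → L) {c : L}
    (hc : ∀ x : L, ⁅x, c⁆ = 0)
    (hhj : ∀ x y, ⁅D x, ⁅y, c⁆⁆ + ⁅D y, ⁅c, x⁆⁆ + ⁅D c, ⁅x, y⁆⁆ = 0) (x y : L) :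
    ⁅D c, ⁅x, y⁆⁆ = 0 := by
  simpa [hc, ← lie_skew c x] using hhj x y

namespace Matrix

variable {n R : Type*} [Fintype n] [DecidableEq n] [Ring R]

theorem lie_single_same_single_of_ne {i j : n} (hij : i ≠ j) :
    ⁅(single i i 1 : Matrix n n R), single i j 1⁆ = (single i j 1 : Matrix n n R) := by
  rw [Ring.lie_def, single_mul_single_same,
    single_mul_single_of_ne (c := 1) i j i hij.symm, mul_one, sub_zero]

theorem exists_eq_smul_one_of_forall_lie_lie_eq_zero {M : Matrix n n R}
    (hM : ∀ x y : Matrix n n R, ⁅M, ⁅x, y⁆⁆ = 0) : ∃ a : R, M = a • 1 := by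
  have hcomm : Pairwise fun i j => Commute (single i j (1 : R)) M := by
    intro i j hij
    have h := hM (single i i 1) (single i j 1)
    rw [lie_single_same_single_of_ne hij, Ring.lie_def, sub_eq_zero] at h
    exact h.symm
  obtain ⟨a, rfl⟩ := mem_range_scalar_of_commute_single hcomm
  exact ⟨a, by rw [smul_one_eq_diagonal, scalar_apply]⟩

end Matrix

theorem stmt5_general (n : ℕ)
    (D : Matrix (Fin n) (Fin n) ℂ →ₗ[ℂ] Matrix (Fin n) (Fin n) ℂ)
    (hhj : ∀ x y z, ⁅D x, ⁅y, z⁆⁆ + ⁅D y, ⁅z, x⁆⁆ + ⁅D z, ⁅x, y⁆⁆ = 0) :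
    ∃ a : ℂ, D 1 = a • (1 : Matrix (Fin n) (Fin n) ℂ) := by
  -- the commutator Lie ring structure of an associative ring is not a global instance
  let _ : LieRing (Matrix (Fin n) (Fin n) ℂ) := LieRing.ofAssociativeRing
  exact exists_eq_smul_one_of_forall_lie_lie_eq_zero <|
    lie_apply_lie_eq_zero_of_forall_lie_eq_zero D (c := 1) (fun x => by simp [Ring.lie_def])
      (fun x y => hhj x y 1)

/-- for `n ≥ 3`, a multiplicative Hom-Lie algebra structure on
`gl_n(ℂ)` restricting to the identity on `sl_n(ℂ)` sends the identity matrix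
`z = 1` to `a • z` for some `a ∈ ℂ`; hence `D = diag{1,…,1,a}` in a basis
adapted to `gl_n(ℂ) = sl_n(ℂ) ⊕ ℂ·1`. -/
theorem stmt5 (n : ℕ) (hn : 3 ≤ n)
    (D : Matrix (Fin n) (Fin n) ℂ →ₗ[ℂ] Matrix (Fin n) (Fin n) ℂ)
    (hmul : ∀ x y, D ⁅x, y⁆ = ⁅D x, D y⁆)
    (hhj : ∀ x y z, ⁅D x, ⁅y, z⁆⁆ + ⁅D y, ⁅z, x⁆⁆ + ⁅D z, ⁅x, y⁆⁆ = 0)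
    (hsl : ∀ A : Matrix (Fin n) (Fin n) ℂ, A.trace = 0 → D A = A) :
    ∃ a : ℂ, D 1 = a • (1 : Matrix (Fin n) (Fin n) ℂ) :=
  stmt5_general n D hhj
end

section
/- Let n ≥ 3 and let D be a multiplicative Hom-Lie algebra structure on gl_n(ℂ) whose restriction to sl_n(ℂ) is zero. Then D(z) lies in the center of gl_n(ℂ), i.e., D(z) = a·z for some a ∈ ℂ, where z is the identity matrix. -/
open Matrix

/-!
Put `x = 1` in the Hom-Jacobi identity: since `D` kills traceless matrices, `D 1` commutes with
every commutator of traceless matrices. For `n ≥ 3` and `i ≠ j`, choosing `k ∉ {i, j}` writes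
`E i j = ⁅E i k, E k j⁆` as such a commutator, and a matrix commuting with every off-diagonal
`E i j` is scalar.
-/

namespace Matrix

variable {ι R : Type*} [Fintype ι] [DecidableEq ι] [CommRing R]

theorem lie_single_single_of_ne {i j : ι} (hij : i ≠ j) (k : ι) (a b : R) :
    ⁅single i k a, single k j b⁆ = single i j (a * b) := by
  simp [Ring.lie_def, hij.symm]

theorem mem_range_scalar_of_lie_lie_traceless_eq_zero (hι : 3 ≤ Fintype.card ι)
    {M : Matrix ι ι R}
    (hM : ∀ A B : Matrix ι ι R, A.trace = 0 → B.trace = 0 → ⁅M, ⁅A, B⁆⁆ = 0) :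
    M ∈ Set.range (scalar ι) := by
  refine mem_range_scalar_of_commute_single fun i j hij => ?_
  obtain ⟨k, hki, hkj⟩ := ENat.exists_ne_ne_of_three_le (by simpa using hι) i j
  have hlie : ⁅M, single i j (1 : R)⁆ = 0 := by
    rw [← mul_one (1 : R), ← lie_single_single_of_ne hij k]
    exact hM _ _ (trace_single_eq_of_ne _ _ _ hki.symm) (trace_single_eq_of_ne _ _ _ hkj)
  rw [Ring.lie_def, sub_eq_zero] at hlie
  exact hlie.symm

end Matrix

theorem stmt6_general (n : ℕ) (hn : 3 ≤ n)
    (D : Matrix (Fin n) (Fin n) ℂ →ₗ[ℂ] Matrix (Fin n) (Fin n) ℂ)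
    (hhj : ∀ x y w, ⁅D x, ⁅y, w⁆⁆ + ⁅D y, ⁅w, x⁆⁆ + ⁅D w, ⁅x, y⁆⁆ = 0)
    (hsl : ∀ A : Matrix (Fin n) (Fin n) ℂ, A.trace = 0 → D A = 0) :
    ∃ a : ℂ, D 1 = a • (1 : Matrix (Fin n) (Fin n) ℂ) := by
  have hcentral : ∀ A B : Matrix (Fin n) (Fin n) ℂ, A.trace = 0 → B.trace = 0 →
      ⁅D 1, ⁅A, B⁆⁆ = 0 := fun A B hA hB => by
    simpa [hsl A hA, hsl B hB, Ring.lie_def] using hhj 1 A B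
  obtain ⟨a, ha⟩ :=
    mem_range_scalar_of_lie_lie_traceless_eq_zero (by simpa using hn) hcentral
  exact ⟨a, by rw [← ha, scalar_apply, smul_one_eq_diagonal]⟩

/-- for `n ≥ 3`, a multiplicative Hom-Lie algebra structure on
`gl_n(ℂ)` restricting to zero on `sl_n(ℂ)` sends the identity matrix `z = 1`
into the center: `D z = a • z` for some `a ∈ ℂ`. -/
theorem stmt6 (n : ℕ) (hn : 3 ≤ n)
    (D : Matrix (Fin n) (Fin n) ℂ →ₗ[ℂ] Matrix (Fin n) (Fin n) ℂ)
    (hmul : ∀ x y, D ⁅x, y⁆ = ⁅D x, D y⁆)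
    (hhj : ∀ x y w, ⁅D x, ⁅y, w⁆⁆ + ⁅D y, ⁅w, x⁆⁆ + ⁅D w, ⁅x, y⁆⁆ = 0)
    (hsl : ∀ A : Matrix (Fin n) (Fin n) ℂ, A.trace = 0 → D A = 0) :
    ∃ a : ℂ, D 1 = a • (1 : Matrix (Fin n) (Fin n) ℂ) :=
  stmt6_general n hn D hhj hsl
end

section
/- Let h_{2n+1}(ℂ) be the Heisenberg Lie algebra with basis z, x_1, y_1, ..., x_n, y_n satisfying [x_i, y_j] = δ_{ij}·z and all other brackets of basis elements zero. For any a,b,c,d,a_1,b_1,...,a_n,b_n ∈ ℂ, the linear map D defined by D(z) = (ad - bc)z, D(x_i) = a_i z + a x_i + c y_i, D(y_i) = b_i z + b x_i + d y_i is a multiplicative Hom-Lie algebra structure on h_{2n+1}(ℂ). -/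
/-!
Modulo the centre `R ∙ z`, each plane spanned by `x i, y i` is mapped by `D` through the matrix
`[[a, b], [c, d]]`, and the bracket of two plane vectors is their symplectic pairing times `z`.
Since a `2 × 2` matrix scales the symplectic pairing by its determinant `ad - bc`, which is also
how `D` acts on `z`, `D` is multiplicative. The Hom-Lie identity holds for every map because
all brackets lie in the centre, so double brackets vanish.
-/

section Heisenberg

variable {R L : Type*} [CommRing R] [LieRing L] [LieAlgebra R L] {n : ℕ}

structure IsHeisenbergBasis (bas : Module.Basis (Unit ⊕ Fin n ⊕ Fin n) R L) (z : L)
    (x y : Fin n → L) : Prop where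
  z_eq : z = bas (Sum.inl ())
  x_eq : ∀ i, x i = bas (Sum.inr (Sum.inl i))
  y_eq : ∀ i, y i = bas (Sum.inr (Sum.inr i))
  lie_x_y : ∀ i j, ⁅x i, y j⁆ = if i = j then z else 0
  lie_x_x : ∀ i j, ⁅x i, x j⁆ = 0
  lie_y_y : ∀ i j, ⁅y i, y j⁆ = 0
  lie_x_z : ∀ i, ⁅x i, z⁆ = 0
  lie_y_z : ∀ i, ⁅y i, z⁆ = 0

namespace IsHeisenbergBasis

variable {bas : Module.Basis (Unit ⊕ Fin n ⊕ Fin n) R L} {z : L} {x y : Fin n → L}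

theorem lie_plane (h : IsHeisenbergBasis bas z x y) (p q r s : R) (i j : Fin n) :
    ⁅p • x i + q • y i, r • x j + s • y j⁆ = (if i = j then p * s - q * r else 0) • z := by
  have lie_y_x : ⁅y i, x j⁆ = -if j = i then z else 0 := by rw [← lie_skew, h.lie_x_y]
  simp only [add_lie, lie_add, smul_lie, lie_smul, h.lie_x_x, h.lie_y_y, h.lie_x_y, lie_y_x]
  rcases eq_or_ne i j with rfl | hij
  · simp only [ite_true]
    module
  · simp only [hij, hij.symm, ite_false, smul_zero, neg_zero, add_zero, zero_smul]

theorem forall_basis (h : IsHeisenbergBasis bas z x y) {P : L → Prop} (hz : P z)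
    (hplane : ∀ i (p q : R), P (p • x i + q • y i)) : ∀ k, P (bas k) := by
  rintro (⟨⟩ | i | i)
  · simpa [← h.z_eq] using hz
  · simpa [← h.x_eq] using hplane i 1 0
  · simpa [← h.y_eq] using hplane i 0 1

theorem z_lie (h : IsHeisenbergBasis bas z x y) (u : L) : ⁅z, u⁆ = 0 := by
  have hbas : ∀ k, ⁅z, bas k⁆ = 0 :=
    h.forall_basis (P := (⁅z, ·⁆ = 0)) (lie_self z) fun i p q ↦ by
      rw [← lie_skew, add_lie, smul_lie, smul_lie, h.lie_x_z, h.lie_y_z]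
      simp
  have : LieModule.toEnd R L L z = 0 := bas.ext hbas
  simpa using LinearMap.congr_fun this u

theorem lie_z (h : IsHeisenbergBasis bas z x y) (u : L) : ⁅u, z⁆ = 0 := by
  rw [← lie_skew, h.z_lie, neg_zero]

theorem ext_bilinear (h : IsHeisenbergBasis bas z x y) {M : Type*} [AddCommGroup M] [Module R M]
    {B B' : L →ₗ[R] L →ₗ[R] M} (hz_left : ∀ v, B z v = B' z v) (hz_right : ∀ u, B u z = B' u z)
    (hplane : ∀ i (p q : R) j (r s : R),
      B (p • x i + q • y i) (r • x j + s • y j) = B' (p • x i + q • y i) (r • x j + s • y j)) :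
    B = B' :=
  LinearMap.ext_basis bas bas <|
    h.forall_basis (P := fun u ↦ ∀ l, B u (bas l) = B' u (bas l)) (fun _ ↦ hz_left _) fun i p q ↦
      h.forall_basis (P := fun v ↦ B _ v = B' _ v) (hz_right _) fun j r s ↦ hplane i p q j r s

theorem lie_mem_span_z (h : IsHeisenbergBasis bas z x y) (u v : L) : ⁅u, v⁆ ∈ R ∙ z := by
  suffices (LieModule.toEnd R L L : L →ₗ[R] L →ₗ[R] L).compr₂ (R ∙ z).mkQ = 0 by
    simpa using LinearMap.congr_fun₂ this u v
  refine h.ext_bilinear (fun v ↦ by simp [h.z_lie]) (fun u ↦ by simp [h.lie_z]) fun i p q j r s ↦ ?_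
  simp only [LinearMap.compr₂_apply, LieHom.coe_toLinearMap, LieModule.toEnd_apply_apply,
    h.lie_plane, LinearMap.zero_apply, Submodule.mkQ_apply, Submodule.Quotient.mk_eq_zero]
  exact Submodule.smul_mem _ _ (Submodule.mem_span_singleton_self z)

theorem lie_lie_eq_zero (h : IsHeisenbergBasis bas z x y) (t u v : L) : ⁅t, ⁅u, v⁆⁆ = 0 := by
  obtain ⟨c, hc⟩ := Submodule.mem_span_singleton.mp (h.lie_mem_span_z u v)
  rw [← hc, lie_smul, h.lie_z, smul_zero]

theorem lie_smul_z_add (h : IsHeisenbergBasis bas z x y) (α β : R) (u v : L) :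
    ⁅α • z + u, β • z + v⁆ = ⁅u, v⁆ := by
  simp only [add_lie, lie_add, smul_lie, lie_smul, h.z_lie, h.lie_z, smul_zero, zero_add]

theorem map_lie (h : IsHeisenbergBasis bas z x y) {a b c d : R} {A B : Fin n → R}
    {D : L →ₗ[R] L} (hDz : D z = (a * d - b * c) • z)
    (hDx : ∀ i, D (x i) = A i • z + a • x i + c • y i)
    (hDy : ∀ i, D (y i) = B i • z + b • x i + d • y i) (u v : L) :
    D ⁅u, v⁆ = ⁅D u, D v⁆ := by
  have hD_plane : ∀ i (p q : R), D (p • x i + q • y i) =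
      (p * A i + q * B i) • z + ((a * p + b * q) • x i + (c * p + d * q) • y i) := by
    intro i p q
    simp only [map_add, map_smul, hDx, hDy]
    module
  let bracket : L →ₗ[R] L →ₗ[R] L := LieModule.toEnd R L L
  suffices bracket.compr₂ D = bracket.compl₁₂ D D by
    simpa [bracket] using LinearMap.congr_fun₂ this u v
  refine h.ext_bilinear (fun v ↦ ?_) (fun u ↦ ?_) fun i p q j r s ↦ ?_
  · simp [bracket, hDz, h.z_lie]
  · simp [bracket, hDz, h.lie_z]
  · simp only [bracket, LinearMap.compr₂_apply, LinearMap.compl₁₂_apply, LieHom.coe_toLinearMap,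
      LieModule.toEnd_apply_apply, hD_plane, h.lie_smul_z_add, h.lie_plane, map_smul, hDz]
    split_ifs
    · -- the determinant identity `(ps - qr)(ad - bc) = (ap + bq)(cr + ds) - (cp + dq)(ar + bs)`
      rw [smul_smul]
      congr 1
      ring
    · simp

end IsHeisenbergBasis
end Heisenberg

theorem stmt7_general (n : ℕ) {L : Type*} [LieRing L] [LieAlgebra ℂ L]
    (bas : Module.Basis (Unit ⊕ Fin n ⊕ Fin n) ℂ L)
    (z : L) (x y : Fin n → L)
    (hz : z = bas (Sum.inl ()))
    (hx : ∀ i, x i = bas (Sum.inr (Sum.inl i)))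
    (hy : ∀ i, y i = bas (Sum.inr (Sum.inr i)))
    (hxy : ∀ i j, ⁅x i, y j⁆ = if i = j then z else 0)
    (hxx : ∀ i j, ⁅x i, x j⁆ = 0) (hyy : ∀ i j, ⁅y i, y j⁆ = 0)
    (hxz : ∀ i, ⁅x i, z⁆ = 0) (hyz : ∀ i, ⁅y i, z⁆ = 0)
    (a b c d : ℂ) (A B : Fin n → ℂ)
    (D : L →ₗ[ℂ] L)
    (hDz : D z = (a * d - b * c) • z)
    (hDx : ∀ i, D (x i) = A i • z + a • x i + c • y i)
    (hDy : ∀ i, D (y i) = B i • z + b • x i + d • y i) :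
    (∀ u v, D ⁅u, v⁆ = ⁅D u, D v⁆) ∧
      (∀ u v w, ⁅D u, ⁅v, w⁆⁆ + ⁅D v, ⁅w, u⁆⁆ + ⁅D w, ⁅u, v⁆⁆ = 0) := by
  have h : IsHeisenbergBasis bas z x y := ⟨hz, hx, hy, hxy, hxx, hyy, hxz, hyz⟩
  refine ⟨h.map_lie hDz hDx hDy, fun u v w ↦ ?_⟩
  rw [h.lie_lie_eq_zero, h.lie_lie_eq_zero, h.lie_lie_eq_zero, add_zero, add_zero]

/-- on the Heisenberg Lie algebra `h_{2n+1}(ℂ)` (basis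
`z, x_i, y_i` with `⁅x_i, y_j⁆ = δ_{ij} z`, `z` central), the map
`D(a,b,c,d;α)` with `D z = (ad-bc) z`, `D x_i = a_i z + a x_i + c y_i`,
`D y_i = b_i z + b x_i + d y_i` is a multiplicative Hom-Lie structure. -/
theorem stmt7 (n : ℕ) (hn : 0 < n) {L : Type*} [LieRing L] [LieAlgebra ℂ L]
    (bas : Module.Basis (Unit ⊕ Fin n ⊕ Fin n) ℂ L)
    (z : L) (x y : Fin n → L)
    (hz : z = bas (Sum.inl ()))
    (hx : ∀ i, x i = bas (Sum.inr (Sum.inl i)))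
    (hy : ∀ i, y i = bas (Sum.inr (Sum.inr i)))
    (hxy : ∀ i j, ⁅x i, y j⁆ = if i = j then z else 0)
    (hxx : ∀ i j, ⁅x i, x j⁆ = 0) (hyy : ∀ i j, ⁅y i, y j⁆ = 0)
    (hxz : ∀ i, ⁅x i, z⁆ = 0) (hyz : ∀ i, ⁅y i, z⁆ = 0)
    (a b c d : ℂ) (A B : Fin n → ℂ)
    (D : L →ₗ[ℂ] L)
    (hDz : D z = (a * d - b * c) • z)
    (hDx : ∀ i, D (x i) = A i • z + a • x i + c • y i)
    (hDy : ∀ i, D (y i) = B i • z + b • x i + d • y i) :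
    (∀ u v, D ⁅u, v⁆ = ⁅D u, D v⁆) ∧
      (∀ u v w, ⁅D u, ⁅v, w⁆⁆ + ⁅D v, ⁅w, u⁆⁆ + ⁅D w, ⁅u, v⁆⁆ = 0) :=
  stmt7_general n bas z x y hz hx hy hxy hxx hyy hxz hyz a b c d A B D hDz hDx hDy
end

section
/- There exists a nontrivial involutive multiplicative Hom-Lie algebra structure on the Heisenberg Lie algebra h_{2n+1}(ℂ): the linear map D with D(z) = z, D(x_i) = -x_i, D(y_i) = -y_i is a multiplicative Hom-Lie algebra structure satisfying D² = id and D ≠ id. -/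
/-!
Every bracket of the Heisenberg algebra lies in the central line `ℂ ∙ z`, and `D + id` maps into
that line, since it sends `z` to `2z` and kills the `x_i`, `y_i`. So `D u` is `-u` up to a central
element, whence `⁅D u, D v⁆ = ⁅u, v⁆ = D ⁅u, v⁆`; `D ∘ D = id` because `D` fixes `ℂ ∙ z`; and the
Hom-Jacobi identity holds term by term since double brackets vanish. Finally `D x_1 = -x_1 ≠ x_1`.
-/

open LieAlgebra LieModule

theorem Module.Basis.map_mem_of_forall {ι R M N : Type*} [Semiring R] [AddCommMonoid M]
    [Module R M] [AddCommMonoid N] [Module R N] (b : Module.Basis ι R M) (f : M →ₗ[R] N)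
    {p : Submodule R N} (h : ∀ i, f (b i) ∈ p) (u : M) : f u ∈ p :=
  (Submodule.span_le (p := p.comap f)).mpr (Set.range_subset_iff.mpr h) (b.mem_span u)

theorem LinearMap.comp_self_eq_id_of_add_mem {R M : Type*} [Semiring R] [AddCommGroup M]
    [Module R M] {D : M →ₗ[R] M} {K : Submodule R M} (hK : ∀ k ∈ K, D k = k)
    (hD : ∀ u, D u + u ∈ K) : D ∘ₗ D = LinearMap.id := by
  ext u
  have h := hK _ (hD u)
  rw [map_add, add_comm (D u)] at h
  exact add_right_cancel h

namespace LieAlgebra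

variable {ι R L : Type*} [CommRing R] [LieRing L] [LieAlgebra R L]

theorem lie_eq_zero_of_mem_center {c : L} (hc : c ∈ center R L) (u : L) : ⁅c, u⁆ = 0 := by
  rw [← lie_skew, (mem_maxTrivSubmodule R L L c).mp hc u, neg_zero]

theorem mem_center_of_forall_basis (b : Module.Basis ι R L) {z : L} (h : ∀ i, ⁅b i, z⁆ = 0) :
    z ∈ center R L := by
  have hz : toEnd R L L z = 0 :=
    b.ext fun i => by rw [toEnd_apply_apply, ← lie_skew, h i, neg_zero, LinearMap.zero_apply]
  refine (mem_maxTrivSubmodule R L L z).mpr fun u => ?_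
  rw [← lie_skew, ← toEnd_apply_apply R, hz, LinearMap.zero_apply, neg_zero]

theorem lie_mem_of_forall_basis (b : Module.Basis ι R L) {K : Submodule R L}
    (h : ∀ i j, ⁅b i, b j⁆ ∈ K) (u v : L) : ⁅u, v⁆ ∈ K := by
  have hleft : ∀ i v, ⁅b i, v⁆ ∈ K := fun i => b.map_mem_of_forall (toEnd R L L (b i)) (h i)
  refine b.map_mem_of_forall (toEnd R L L u) (fun j => ?_) v
  rw [toEnd_apply_apply, ← lie_skew]
  exact K.neg_mem (hleft j u)

theorem lie_lie_eq_zero_of_lie_mem_center (h : ∀ u v : L, ⁅u, v⁆ ∈ center R L) (u v w : L) :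
    ⁅u, ⁅v, w⁆⁆ = 0 :=
  (mem_maxTrivSubmodule R L L _).mp (h v w) u

theorem lie_map_map_of_add_mem_center {D : L →ₗ[R] L} (hD : ∀ u, D u + u ∈ center R L)
    (u v : L) : ⁅D u, D v⁆ = ⁅u, v⁆ := by
  have hsub : ∀ w, D w = (D w + w) - w := fun w => (add_sub_cancel_right _ _).symm
  rw [hsub u, hsub v, sub_lie, lie_sub, lie_sub, lie_eq_zero_of_mem_center (hD u),
    lie_eq_zero_of_mem_center (hD u), (mem_maxTrivSubmodule R L L _).mp (hD v)]
  abel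

end LieAlgebra

namespace Heisenberg

variable {R L : Type*} [CommRing R] [LieRing L] [LieAlgebra R L] {n : ℕ}
  (b : Module.Basis (Unit ⊕ Fin n ⊕ Fin n) R L) {z : L} {x y : Fin n → L}

theorem mem_center (hz : z = b (Sum.inl ())) (hx : ∀ i, x i = b (Sum.inr (Sum.inl i)))
    (hy : ∀ i, y i = b (Sum.inr (Sum.inr i))) (hxz : ∀ i, ⁅x i, z⁆ = 0)
    (hyz : ∀ i, ⁅y i, z⁆ = 0) : z ∈ center R L :=
  mem_center_of_forall_basis b <| by
    rintro (⟨⟩ | i | i) <;> simp only [← hz, ← hx, ← hy, lie_self, hxz, hyz]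

theorem lie_mem_span (hz : z = b (Sum.inl ())) (hx : ∀ i, x i = b (Sum.inr (Sum.inl i)))
    (hy : ∀ i, y i = b (Sum.inr (Sum.inr i))) (hxy : ∀ i j, ⁅x i, y j⁆ = if i = j then z else 0)
    (hxx : ∀ i j, ⁅x i, x j⁆ = 0) (hyy : ∀ i j, ⁅y i, y j⁆ = 0)
    (hxz : ∀ i, ⁅x i, z⁆ = 0) (hyz : ∀ i, ⁅y i, z⁆ = 0) (u v : L) : ⁅u, v⁆ ∈ R ∙ z := by
  have hzu := lie_eq_zero_of_mem_center (mem_center b hz hx hy hxz hyz)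
  have hxyK : ∀ i j, ⁅x i, y j⁆ ∈ R ∙ z := fun i j => by
    rw [hxy]; split_ifs
    exacts [Submodule.mem_span_singleton_self z, Submodule.zero_mem _]
  refine lie_mem_of_forall_basis b (fun i j => ?_) u v
  rcases i with ⟨⟩ | i | i <;> rcases j with ⟨⟩ | j | j <;>
    simp only [← hz, ← hx, ← hy, hzu, hxz, hyz, hxx, hyy, hxyK, Submodule.zero_mem]
  rw [← lie_skew]
  exact Submodule.neg_mem _ (hxyK j i)

theorem add_mem_span (hz : z = b (Sum.inl ())) (hx : ∀ i, x i = b (Sum.inr (Sum.inl i)))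
    (hy : ∀ i, y i = b (Sum.inr (Sum.inr i))) {D : L →ₗ[R] L} (hDz : D z = z)
    (hDx : ∀ i, D (x i) = -x i) (hDy : ∀ i, D (y i) = -y i) (u : L) : D u + u ∈ R ∙ z :=
  b.map_mem_of_forall (D + LinearMap.id) (by
    rintro (⟨⟩ | i | i) <;>
      simp only [LinearMap.add_apply, LinearMap.id_apply, ← hz, ← hx, ← hy, hDz, hDx, hDy,
        neg_add_cancel, Submodule.zero_mem]
    exact Submodule.add_mem _ (Submodule.mem_span_singleton_self z)
      (Submodule.mem_span_singleton_self z)) u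

end Heisenberg

/-- `D z = z`, `D x_i = -x_i`, `D y_i = -y_i` is a nontrivial
involutive multiplicative Hom-Lie algebra structure on `h_{2n+1}(ℂ)`. -/
theorem stmt9 (n : ℕ) (hn : 0 < n) {L : Type*} [LieRing L] [LieAlgebra ℂ L]
    (bas : Module.Basis (Unit ⊕ Fin n ⊕ Fin n) ℂ L)
    (z : L) (x y : Fin n → L)
    (hz : z = bas (Sum.inl ()))
    (hx : ∀ i, x i = bas (Sum.inr (Sum.inl i)))
    (hy : ∀ i, y i = bas (Sum.inr (Sum.inr i)))
    (hxy : ∀ i j, ⁅x i, y j⁆ = if i = j then z else 0)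
    (hxx : ∀ i j, ⁅x i, x j⁆ = 0) (hyy : ∀ i j, ⁅y i, y j⁆ = 0)
    (hxz : ∀ i, ⁅x i, z⁆ = 0) (hyz : ∀ i, ⁅y i, z⁆ = 0)
    (D : L →ₗ[ℂ] L)
    (hDz : D z = z)
    (hDx : ∀ i, D (x i) = -x i)
    (hDy : ∀ i, D (y i) = -y i) :
    (∀ u v, D ⁅u, v⁆ = ⁅D u, D v⁆) ∧
      (∀ u v w, ⁅D u, ⁅v, w⁆⁆ + ⁅D v, ⁅w, u⁆⁆ + ⁅D w, ⁅u, v⁆⁆ = 0) ∧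
      D ∘ₗ D = LinearMap.id ∧ D ≠ LinearMap.id := by
  have hKc : ℂ ∙ z ≤ (center ℂ L).toSubmodule :=
    (Submodule.span_singleton_le_iff_mem _ _).mpr (Heisenberg.mem_center bas hz hx hy hxz hyz)
  have hLK := Heisenberg.lie_mem_span bas hz hx hy hxy hxx hyy hxz hyz
  have hD := Heisenberg.add_mem_span bas hz hx hy hDz hDx hDy
  have hDK : ∀ k ∈ ℂ ∙ z, D k = k := fun k hk => by
    obtain ⟨a, rfl⟩ := Submodule.mem_span_singleton.mp hk
    rw [map_smul, hDz]
  have hlie_lie := lie_lie_eq_zero_of_lie_mem_center fun u v => hKc (hLK u v)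
  refine ⟨fun u v => ?_, fun u v w => ?_, D.comp_self_eq_id_of_add_mem hDK hD, fun hid => ?_⟩
  · rw [hDK _ (hLK u v), lie_map_map_of_add_mem_center fun u => hKc (hD u)]
  · rw [hlie_lie, hlie_lie, hlie_lie, add_zero, add_zero]
  · have : IsAddTorsionFree L := .of_isTorsionFree ℂ L
    have hx0 : x ⟨0, hn⟩ = -x ⟨0, hn⟩ := by rw [← hDx, hid, LinearMap.id_apply]
    exact bas.ne_zero _ ((hx _).symm.trans (self_eq_neg.mp hx0))
end

section
/- There exists a multiplicative Hom-Lie algebra structure on h_{2n+1}(ℂ) that is not invertible and not zero: namely D with D(z) = 0, D(x_i) = x_i + y_i, D(y_i) = x_i + y_i is a Lie algebra endomorphism satisfying the Hom-Jacobi identity, D ≠ 0, and D is not injective. -/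
/-!
Every bracket of basis vectors is a multiple of the central element `z`, so all brackets lie in
`ℂ ∙ z`: double brackets vanish, which gives the Hom-Jacobi identity, and `D`, which kills `z`,
kills all brackets. The image of `D` is spanned by the `x i + y i`, which pairwise commute because
`⁅x i + y i, x j + y j⁆ = δᵢⱼ z - δᵢⱼ z`; hence `⁅D u, D v⁆ = 0 = D ⁅u, v⁆`. Finally `D z = 0`
with `z ≠ 0`, while `D (x i) = x i + y i ≠ 0`.
-/

open Submodule Set

section LieSpan

variable {R L : Type*} [CommRing R] [LieRing L] [LieAlgebra R L]

theorem lie_mem_of_mem_span {s t : Set L} {N : Submodule R L}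
    (h : ∀ a ∈ s, ∀ b ∈ t, ⁅a, b⁆ ∈ N) {u v : L} (hu : u ∈ span R s) (hv : v ∈ span R t) :
    ⁅u, v⁆ ∈ N := by
  induction hu, hv using span_induction₂ with
  | mem_mem a b ha hb => exact h a ha b hb
  | zero_left => simp
  | zero_right => simp
  | add_left _ _ _ _ _ _ h₁ h₂ => rw [add_lie]; exact add_mem h₁ h₂
  | add_right _ _ _ _ _ _ h₁ h₂ => rw [lie_add]; exact add_mem h₁ h₂
  | smul_left r _ _ _ _ h => rw [smul_lie]; exact smul_mem N r h
  | smul_right r _ _ _ _ h => rw [lie_smul]; exact smul_mem N r h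

theorem Module.Basis.lie_mem_of_forall_lie_basis_mem {ι : Type*} (b : Basis ι R L)
    {N : Submodule R L} (h : ∀ i j, ⁅b i, b j⁆ ∈ N) (u v : L) : ⁅u, v⁆ ∈ N :=
  lie_mem_of_mem_span (by simpa only [forall_mem_range]) (b.mem_span u) (b.mem_span v)

theorem Module.Basis.lie_eq_zero_of_forall_lie_basis_eq_zero {ι : Type*} (b : Basis ι R L)
    {z : L} (h : ∀ i, ⁅b i, z⁆ = 0) (t : L) : ⁅t, z⁆ = 0 :=
  (mem_bot R).1 <| lie_mem_of_mem_span (t := {z}) (by simpa [forall_mem_range] using h)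
    (b.mem_span t) (mem_span_singleton_self z)

theorem LinearMap.map_lie_eq_zero_of_lie_mem_span_singleton {M : Type*} [AddCommGroup M]
    [Module R M] (f : L →ₗ[R] M) {z : L} (hfz : f z = 0) (h : ∀ u v : L, ⁅u, v⁆ ∈ R ∙ z)
    (u v : L) : f ⁅u, v⁆ = 0 := by
  obtain ⟨c, hc⟩ := mem_span_singleton.1 (h u v)
  rw [← hc, map_smul, hfz, smul_zero]

theorem LinearMap.map_lie_of_map_lie_eq_zero {s : Set L} (hs : ∀ a ∈ s, ∀ b ∈ s, ⁅a, b⁆ = 0)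
    (D : L →ₗ[R] L) (hD : ∀ u v : L, D ⁅u, v⁆ = 0) (hrange : ∀ u, D u ∈ span R s) (u v : L) :
    D ⁅u, v⁆ = ⁅D u, D v⁆ := by
  rw [hD, eq_comm, ← mem_bot R]
  exact lie_mem_of_mem_span (by simpa using hs) (hrange u) (hrange v)

end LieSpan

theorem Module.Basis.add_ne_zero {ι R M : Type*} [Ring R] [Nontrivial R] [AddCommGroup M]
    [Module R M] (b : Basis ι R M) {i j : ι} (hij : i ≠ j) : b i + b j ≠ 0 := by
  intro h
  have := congr_arg (fun v => b.repr v i) h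
  simp [hij.symm] at this

section Heisenberg

variable {R ι L : Type*} [CommRing R] [LieRing L] [LieAlgebra R L]
  {b : Module.Basis (Unit ⊕ ι ⊕ ι) R L} {z : L} {x y : ι → L}

theorem heisenberg_lie_center_eq_zero (hz : z = b (.inl ())) (hx : ∀ i, x i = b (.inr (.inl i)))
    (hy : ∀ i, y i = b (.inr (.inr i))) (hxz : ∀ i, ⁅x i, z⁆ = 0) (hyz : ∀ i, ⁅y i, z⁆ = 0)
    (t : L) : ⁅t, z⁆ = 0 := by
  refine b.lie_eq_zero_of_forall_lie_basis_eq_zero ?_ t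
  rintro (⟨⟩ | i | i)
  · rw [← hz, lie_self]
  · rw [← hx, hxz]
  · rw [← hy, hyz]

theorem heisenberg_lie_mem_span_singleton [DecidableEq ι] (hz : z = b (.inl ()))
    (hx : ∀ i, x i = b (.inr (.inl i))) (hy : ∀ i, y i = b (.inr (.inr i)))
    (hxy : ∀ i j, ⁅x i, y j⁆ = if i = j then z else 0)
    (hxx : ∀ i j, ⁅x i, x j⁆ = 0) (hyy : ∀ i j, ⁅y i, y j⁆ = 0)
    (hzc : ∀ t : L, ⁅t, z⁆ = 0) (u v : L) : ⁅u, v⁆ ∈ R ∙ z := by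
  have hcz : ∀ t : L, ⁅z, t⁆ = 0 := fun t => by rw [← lie_skew, hzc, neg_zero]
  refine b.lie_mem_of_forall_lie_basis_mem ?_ u v
  rintro (⟨⟩ | i | i) (⟨⟩ | j | j) <;> simp only [← hz, ← hx, ← hy]
  all_goals
    simp [hxy, hxx, hyy, hzc, hcz, ← lie_skew (y _) (x _), apply_ite, mem_span_singleton_self]

theorem heisenberg_lie_add_add_eq_zero [DecidableEq ι]
    (hxy : ∀ i j, ⁅x i, y j⁆ = if i = j then z else 0)
    (hxx : ∀ i j, ⁅x i, x j⁆ = 0) (hyy : ∀ i j, ⁅y i, y j⁆ = 0) (i j : ι) :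
    ⁅x i + y i, x j + y j⁆ = 0 := by
  rw [add_lie, lie_add, lie_add, hxx, hyy, ← lie_skew (y i), hxy, hxy, eq_comm]
  split_ifs <;> simp_all

theorem heisenberg_map_mem_span (hz : z = b (.inl ())) (hx : ∀ i, x i = b (.inr (.inl i)))
    (hy : ∀ i, y i = b (.inr (.inr i))) (D : L →ₗ[R] L) (hDz : D z = 0)
    (hDx : ∀ i, D (x i) = x i + y i) (hDy : ∀ i, D (y i) = x i + y i) (u : L) :
    D u ∈ span R (range fun i => x i + y i) := by
  suffices map D (span R (range b)) ≤ span R (range fun i => x i + y i) from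
    this (mem_map_of_mem (b.mem_span u))
  rw [map_span_le]
  rintro _ ⟨⟨⟩ | i | i, rfl⟩
  · rw [← hz, hDz]
    exact zero_mem _
  · rw [← hx, hDx]
    exact subset_span (mem_range_self i)
  · rw [← hy, hDy]
    exact subset_span (mem_range_self i)

end Heisenberg

/-- `D z = 0`, `D x_i = x_i + y_i`, `D y_i = x_i + y_i` is a
nonzero, non-injective multiplicative Hom-Lie algebra structure on
`h_{2n+1}(ℂ)`. -/
theorem stmt11 (n : ℕ) (hn : 0 < n) {L : Type*} [LieRing L] [LieAlgebra ℂ L]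
    (bas : Module.Basis (Unit ⊕ Fin n ⊕ Fin n) ℂ L)
    (z : L) (x y : Fin n → L)
    (hz : z = bas (Sum.inl ()))
    (hx : ∀ i, x i = bas (Sum.inr (Sum.inl i)))
    (hy : ∀ i, y i = bas (Sum.inr (Sum.inr i)))
    (hxy : ∀ i j, ⁅x i, y j⁆ = if i = j then z else 0)
    (hxx : ∀ i j, ⁅x i, x j⁆ = 0) (hyy : ∀ i j, ⁅y i, y j⁆ = 0)
    (hxz : ∀ i, ⁅x i, z⁆ = 0) (hyz : ∀ i, ⁅y i, z⁆ = 0)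
    (D : L →ₗ[ℂ] L)
    (hDz : D z = 0)
    (hDx : ∀ i, D (x i) = x i + y i)
    (hDy : ∀ i, D (y i) = x i + y i) :
    (∀ u v, D ⁅u, v⁆ = ⁅D u, D v⁆) ∧
      (∀ u v w, ⁅D u, ⁅v, w⁆⁆ + ⁅D v, ⁅w, u⁆⁆ + ⁅D w, ⁅u, v⁆⁆ = 0) ∧
      D ≠ 0 ∧ ¬ Function.Injective D := by
  have hzc := heisenberg_lie_center_eq_zero hz hx hy hxz hyz
  have hder := heisenberg_lie_mem_span_singleton hz hx hy hxy hxx hyy hzc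
  have hbracket_central (t u v : L) : ⁅t, ⁅u, v⁆⁆ = 0 :=
    (LieAlgebra.ad ℂ L t).map_lie_eq_zero_of_lie_mem_span_singleton (hzc t) hder u v
  refine ⟨D.map_lie_of_map_lie_eq_zero ?_ (D.map_lie_eq_zero_of_lie_mem_span_singleton hDz hder)
      (heisenberg_map_mem_span hz hx hy D hDz hDx hDy),
    fun u v w => by simp only [hbracket_central, add_zero], ?_, ?_⟩
  · rintro _ ⟨i, rfl⟩ _ ⟨j, rfl⟩
    exact heisenberg_lie_add_add_eq_zero hxy hxx hyy i j
  · intro hD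
    have h := hDx ⟨0, hn⟩
    rw [hD, LinearMap.zero_apply, hx, hy, eq_comm] at h
    exact bas.add_ne_zero (by simp) h
  · intro hinj
    exact bas.ne_zero _ (hz ▸ hinj (hDz.trans D.map_zero.symm))
end

section
/- Let u_2(ℂ) be the Lie algebra of 2×2 upper triangular complex matrices with basis E11, E12, E22. For all a,b,c,d ∈ ℂ, the linear map D defined by D(E11) = a·E11 + b·E12 + a·E22, D(E12) = 0, D(E22) = c·E11 + d·E12 + c·E22 is a multiplicative Hom-Lie algebra structure on u_2(ℂ). -/
/-!
Put `z = E11 + E22`. Both `D(E11) = a z + b E12` and `D(E22) = c z + d E12` lie in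
`span {z, E12}`, which is abelian because `⁅z, E12⁆ = E12 - E12 = 0`, and every bracket of
`u₂` is a multiple of `E12`, which `D` kills. Hence `D ⁅u, v⁆ = 0 = ⁅D u, D v⁆`, and every
term `⁅D u, ⁅v, w⁆⁆` of the Hom-Jacobi identity vanishes separately.
-/

open Submodule

theorem Module.Basis.apply_mem_of_forall_mem {ι R M N : Type*} [Semiring R] [AddCommMonoid M]
    [Module R M] [AddCommMonoid N] [Module R N] (b : Module.Basis ι R M) (f : M →ₗ[R] N)
    {S : Submodule R N} (h : ∀ i, f (b i) ∈ S) (x : M) : f x ∈ S := by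
  have : span R (Set.range b) ≤ S.comap f := span_le.2 (Set.range_subset_iff.2 h)
  exact this (b.span_eq ▸ mem_top)

section LieAlgebra

variable {R L : Type*} [CommRing R] [LieRing L] [LieAlgebra R L]

theorem Module.Basis.lie_mem_of_forall_mem {ι : Type*} (b : Module.Basis ι R L)
    {S : Submodule R L} (h : ∀ i j, ⁅b i, b j⁆ ∈ S) (u v : L) : ⁅u, v⁆ ∈ S := by
  have hleft : ∀ i v, ⁅b i, v⁆ ∈ S := fun i =>
    b.apply_mem_of_forall_mem (LieAlgebra.ad R L (b i)) (h i)
  rw [← lie_skew]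
  refine S.neg_mem (b.apply_mem_of_forall_mem (LieAlgebra.ad R L v) (fun j => ?_) u)
  rw [LieAlgebra.ad_apply, ← lie_skew]
  exact S.neg_mem (hleft j v)

theorem lie_eq_zero_of_mem_span_pair {a b x y : L} (hab : ⁅a, b⁆ = 0)
    (hx : x ∈ span R {a, b}) (hy : y ∈ span R {a, b}) : ⁅x, y⁆ = 0 := by
  obtain ⟨s, t, rfl⟩ := mem_span_pair.1 hx
  obtain ⟨s', t', rfl⟩ := mem_span_pair.1 hy
  have hba : ⁅b, a⁆ = 0 := by rw [← lie_skew, hab, neg_zero]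
  simp [hab, hba]

variable (R) in
def IsMultiplicativeHomLie (D : L →ₗ[R] L) : Prop :=
  (∀ u v, D ⁅u, v⁆ = ⁅D u, D v⁆) ∧
    (∀ u v w, ⁅D u, ⁅v, w⁆⁆ + ⁅D v, ⁅w, u⁆⁆ + ⁅D w, ⁅u, v⁆⁆ = 0)

theorem isMultiplicativeHomLie_of_map_lie_eq_zero {A : Submodule R L}
    (hA : ∀ x ∈ A, ∀ y ∈ A, ⁅x, y⁆ = 0) (D : L →ₗ[R] L) (hrange : ∀ u, D u ∈ A)
    (hder : ∀ u v : L, ⁅u, v⁆ ∈ A) (hker : ∀ u v : L, D ⁅u, v⁆ = 0) :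
    IsMultiplicativeHomLie R D := by
  have hterm : ∀ u v w : L, ⁅D u, ⁅v, w⁆⁆ = 0 := fun u v w => hA _ (hrange u) _ (hder v w)
  exact ⟨fun u v => by rw [hker, hA _ (hrange u) _ (hrange v)],
    fun u v w => by rw [hterm, hterm, hterm, add_zero, add_zero]⟩

end LieAlgebra

/-- on `u₂(ℂ)` (basis `E11, E12, E22` with `⁅E11,E12⁆ = E12`,
`⁅E12,E22⁆ = E12`, `⁅E11,E22⁆ = 0`), the map `D(E11) = a E11 + b E12 + a E22`,
`D(E12) = 0`, `D(E22) = c E11 + d E12 + c E22` is a multiplicative Hom-Lie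
algebra structure. -/
theorem stmt12 {L : Type*} [LieRing L] [LieAlgebra ℂ L]
    (bas : Module.Basis (Fin 3) ℂ L)
    (e11 e12 e22 : L)
    (h0 : e11 = bas 0) (h1 : e12 = bas 1) (h2 : e22 = bas 2)
    (r1 : ⁅e11, e12⁆ = e12) (r2 : ⁅e12, e22⁆ = e12) (r3 : ⁅e11, e22⁆ = 0)
    (a b c d : ℂ) (D : L →ₗ[ℂ] L)
    (hD11 : D e11 = a • e11 + b • e12 + a • e22)
    (hD12 : D e12 = 0)
    (hD22 : D e22 = c • e11 + d • e12 + c • e22) :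
    (∀ u v, D ⁅u, v⁆ = ⁅D u, D v⁆) ∧
      (∀ u v w, ⁅D u, ⁅v, w⁆⁆ + ⁅D v, ⁅w, u⁆⁆ + ⁅D w, ⁅u, v⁆⁆ = 0) := by
  subst h0 h1 h2
  set A := span ℂ {bas 0 + bas 2, bas 1}
  have hcomm : ⁅bas 0 + bas 2, bas 1⁆ = 0 := by
    rw [add_lie, r1, ← lie_skew, r2, add_neg_cancel]
  have hder : ∀ u v, ⁅u, v⁆ ∈ ℂ ∙ bas 1 := bas.lie_mem_of_forall_mem fun i j => by
    fin_cases i <;> fin_cases j <;> simp [r1, r2, r3, ← lie_skew (bas 1), ← lie_skew (bas 2)]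
  have hrange : ∀ u, D u ∈ A := bas.apply_mem_of_forall_mem D fun i => by
    fin_cases i
    · exact mem_span_pair.2 ⟨a, b, by rw [Fin.zero_eta, hD11]; module⟩
    · simp [hD12]
    · exact mem_span_pair.2 ⟨c, d, by simp only [Fin.reduceFinMk, hD22]; module⟩
  refine isMultiplicativeHomLie_of_map_lie_eq_zero
    (fun x hx y hy => lie_eq_zero_of_mem_span_pair hcomm hx hy) D hrange
    (fun u v => span_mono (by simp) (hder u v)) fun u v => ?_
  obtain ⟨t, ht⟩ := mem_span_singleton.1 (hder u v)
  rw [← ht, map_smul, hD12, smul_zero]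
end

section
/- Let g be a Lie algebra and D a multiplicative Hom-Lie algebra structure on g. For each k ∈ ℕ, if δ is a D^k-derivation of (g,D), then D∘δ is a D^{k+1}-derivation; hence left composition with D gives a linear map ρ_D^k : Der_k(g) → Der_{k+1}(g). -/
/-- `δ` is a `D^k`-derivation. -/
def IsDerK {g : Type*} [LieRing g] [LieAlgebra ℂ g]
    (D : g →ₗ[ℂ] g) (k : ℕ) (δ : g →ₗ[ℂ] g) : Prop :=
  D ∘ₗ δ = δ ∘ₗ D ∧ ∀ x y : g, δ ⁅x, y⁆ = ⁅δ x, (D ^ k) y⁆ + ⁅(D ^ k) x, δ y⁆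

theorem LinearMap.comp_bracket_of_twisted_derivation {R L : Type*} [Semiring R] [LieRing L]
    [Module R L] {D δ σ : L →ₗ[R] L} (hmul : ∀ x y, D ⁅x, y⁆ = ⁅D x, D y⁆)
    (hδ : ∀ x y, δ ⁅x, y⁆ = ⁅δ x, σ y⁆ + ⁅σ x, δ y⁆) (x y : L) :
    (D ∘ₗ δ) ⁅x, y⁆ = ⁅(D ∘ₗ δ) x, (D ∘ₗ σ) y⁆ + ⁅(D ∘ₗ σ) x, (D ∘ₗ δ) y⁆ := by
  simp only [LinearMap.comp_apply, hδ, map_add, hmul]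

theorem IsDerK.comp_left {g : Type*} [LieRing g] [LieAlgebra ℂ g] {D δ : g →ₗ[ℂ] g} {k : ℕ}
    (hmul : ∀ x y, D ⁅x, y⁆ = ⁅D x, D y⁆) (hδ : IsDerK D k δ) :
    IsDerK D (k + 1) (D ∘ₗ δ) := by
  obtain ⟨hcomm, hder⟩ := hδ
  refine ⟨(Commute.refl D).mul_right hcomm, fun x y => ?_⟩
  rw [pow_succ']
  exact LinearMap.comp_bracket_of_twisted_derivation hmul hder x y

theorem stmt14_general {g : Type*} [LieRing g] [LieAlgebra ℂ g]
    (D : g →ₗ[ℂ] g)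
    (hmul : ∀ x y, D ⁅x, y⁆ = ⁅D x, D y⁆) :
    ∀ (k : ℕ) (δ : g →ₗ[ℂ] g), IsDerK D k δ → IsDerK D (k + 1) (D ∘ₗ δ) :=
  fun _ _ hδ => hδ.comp_left hmul

/-- if `δ` is a `D^k`-derivation of a multiplicative Hom-Lie
algebra `(g, D)`, then `D ∘ δ` is a `D^{k+1}`-derivation; so left composition
with `D` maps `Der_k(g)` to `Der_{k+1}(g)` (linearly). -/
theorem stmt14 {g : Type*} [LieRing g] [LieAlgebra ℂ g]
    (D : g →ₗ[ℂ] g)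
    (hmul : ∀ x y, D ⁅x, y⁆ = ⁅D x, D y⁆)
    (hhj : ∀ x y z : g, ⁅D x, ⁅y, z⁆⁆ + ⁅D y, ⁅z, x⁆⁆ + ⁅D z, ⁅x, y⁆⁆ = 0) :
    ∀ (k : ℕ) (δ : g →ₗ[ℂ] g), IsDerK D k δ → IsDerK D (k + 1) (D ∘ₗ δ) :=
  stmt14_general D hmul
end
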